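/- arXiv:2106.07189 — 2 statements merged into one kernel-verified Lean document; each statement's English description precedes it below -/
import Mathlib

section
/- Let X, X', S, V, G be real random variables such that (X, S, G, V) are mutually independent, X' is independent of G, E[X²] = E[X'²] = 1, E[V²] = σ², E[S²] ≤ Λ, E[X] = E[X'] = E[V] = 0, (X, V, G) is independent of the pair (X', S), and X' is independent of Z := G·√φ(G)·X + S + V − G·√φ(G)·X' with E[X'·Z] = 0. Then E[X'·S] = E[G·√φ(G)]. -/
open MeasureTheory ProbabilityTheory

/-! Expanding `X' Z = X' (G√φ(G) X + V) + X' S − G√φ(G) X'²`, the first term has mean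
`E[X'] E[G√φ(G) X + V] = 0` because `(X, V, G)` is independent of `X'`, and the last has mean
`E[G√φ(G)] E[X'²] = E[G√φ(G)]` because `G` is independent of `X'`. Hence
`0 = E[X' Z] = E[X' S] − E[G√φ(G)]`. -/

lemma integral_mul_add_sub_mul_of_indepFun {Ω : Type*} [MeasurableSpace Ω] {μ : Measure Ω}
    {Y W S c : Ω → ℝ} (hY : AEStronglyMeasurable Y μ) (hW : AEStronglyMeasurable W μ)
    (hc : AEStronglyMeasurable c μ) (hYW : IndepFun Y W μ) (hYc : IndepFun Y c μ)
    (hYm : ∫ ω, Y ω ∂μ = 0) (hY2 : ∫ ω, Y ω ^ 2 ∂μ = 1) (hci : Integrable c μ)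
    (hYS : Integrable (fun ω => Y ω * S ω) μ)
    (hYZ : Integrable (fun ω => Y ω * (W ω + S ω - c ω * Y ω)) μ) :
    ∫ ω, Y ω * (W ω + S ω - c ω * Y ω) ∂μ = ∫ ω, Y ω * S ω ∂μ - ∫ ω, c ω ∂μ := by
  have hcY2 : IndepFun c (fun ω => Y ω ^ 2) μ :=
    hYc.symm.comp measurable_id (measurable_id.pow_const 2)
  have hY2i : Integrable (fun ω => Y ω ^ 2) μ := Integrable.of_integral_ne_zero (by simp [hY2])
  have hcY2i : Integrable (fun ω => c ω * Y ω ^ 2) μ := hcY2.integrable_mul hci hY2i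
  have hYWi : Integrable (fun ω => Y ω * W ω) μ := by
    refine ((hYZ.sub hYS).add hcY2i).congr (ae_of_all _ fun ω => ?_)
    simp only [Pi.add_apply, Pi.sub_apply]
    ring
  calc ∫ ω, Y ω * (W ω + S ω - c ω * Y ω) ∂μ
      = ∫ ω, Y ω * W ω ∂μ + ∫ ω, Y ω * S ω ∂μ - ∫ ω, c ω * Y ω ^ 2 ∂μ := by
        rw [← integral_add hYWi hYS,
          ← integral_sub (f := fun ω => Y ω * W ω + Y ω * S ω) (hYWi.add hYS) hcY2i]
        congr 1
        funext ω
        ring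
    _ = ∫ ω, Y ω * S ω ∂μ - ∫ ω, c ω ∂μ := by
        rw [hYW.integral_fun_mul_eq_mul_integral hY hW,
          hcY2.integral_fun_mul_eq_mul_integral hc (hY.pow 2), hYm, hY2]
        ring

theorem Xprime_S_correlation_general
    {Ω : Type*} [MeasurableSpace Ω] (μ : Measure Ω)
    (X X' S V G : Ω → ℝ) (φ : ℝ → ℝ)
    (hφ : Measurable φ)
    (hmX : Measurable X) (hmX' : Measurable X')
    (hmV : Measurable V) (hmG : Measurable G)
    -- X' independent of G
    (hX'G : IndepFun X' G μ)
    -- (X, V, G) independent of (X', S)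
    (hpair : IndepFun (fun ω => (X ω, V ω, G ω)) (fun ω => (X' ω, S ω)) μ)
    -- moments
    (hX'2 : ∫ ω, (X' ω) ^ 2 ∂μ = 1)
    (hX'm : ∫ ω, X' ω ∂μ = 0)
    -- integrability of all relevant products
    (hi1 : Integrable (fun ω => X' ω * S ω) μ)
    (hi2 : Integrable (fun ω => G ω * Real.sqrt (φ (G ω))) μ)
    (hi3 : Integrable (fun ω =>
      X' ω * (G ω * Real.sqrt (φ (G ω)) * X ω + S ω + V ω
        - G ω * Real.sqrt (φ (G ω)) * X' ω)) μ)
    -- X' uncorrelated with Z (consequence of `(X', G, Z)` independent with `E X' = 0`)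
    (hX'Z : ∫ ω, X' ω * (G ω * Real.sqrt (φ (G ω)) * X ω + S ω + V ω
        - G ω * Real.sqrt (φ (G ω)) * X' ω) ∂μ = 0) :
    ∫ ω, X' ω * S ω ∂μ = ∫ ω, G ω * Real.sqrt (φ (G ω)) ∂μ := by
  set c : Ω → ℝ := fun ω => G ω * Real.sqrt (φ (G ω))
  have hmf : Measurable fun g => g * Real.sqrt (φ g) := measurable_id.mul hφ.sqrt
  have hmc : Measurable c := hmf.comp hmG
  have hmW : Measurable fun p : ℝ × ℝ × ℝ => p.2.2 * Real.sqrt (φ p.2.2) * p.1 + p.2.1 := by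
    fun_prop
  have hX'W : IndepFun X' (fun ω => c ω * X ω + V ω) μ := hpair.symm.comp measurable_fst hmW
  have hX'c : IndepFun X' c μ := hX'G.comp measurable_id hmf
  have hZ : (fun ω => X' ω * (c ω * X ω + S ω + V ω - c ω * X' ω)) =
      fun ω => X' ω * ((c ω * X ω + V ω) + S ω - c ω * X' ω) := by
    funext ω
    ring
  rw [hZ] at hi3 hX'Z
  have hexpand := integral_mul_add_sub_mul_of_indepFun (W := fun ω => c ω * X ω + V ω)
    hmX'.aestronglyMeasurable ((hmc.mul hmX).add hmV).aestronglyMeasurable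
    hmc.aestronglyMeasurable hX'W hX'c hX'm hX'2 hi2 hi1 hi3
  linarith

/-- Key identity (eqs. (28)–(31)): under the stated independence and moment conditions,
if `X'` is uncorrelated with `Z = G√φ(G)·X + S + V − G√φ(G)·X'`, then
`E[X'·S] = E[G·√φ(G)]`. -/
theorem Xprime_S_correlation
    {Ω : Type*} [MeasurableSpace Ω] (μ : Measure Ω) [IsProbabilityMeasure μ]
    (X X' S V G : Ω → ℝ) (φ : ℝ → ℝ) (σ2 Λ : ℝ)
    (hφ : Measurable φ) (hφ0 : ∀ g, 0 ≤ φ g)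
    (hmX : Measurable X) (hmX' : Measurable X') (hmS : Measurable S)
    (hmV : Measurable V) (hmG : Measurable G)
    -- (X, S, G, V) mutually independent
    (hindep4 : iIndepFun (![X, S, G, V] : Fin 4 → Ω → ℝ) μ)
    -- X' independent of G
    (hX'G : IndepFun X' G μ)
    -- (X, V, G) independent of (X', S)
    (hpair : IndepFun (fun ω => (X ω, V ω, G ω)) (fun ω => (X' ω, S ω)) μ)
    -- moments
    (hX2 : ∫ ω, (X ω) ^ 2 ∂μ = 1) (hX'2 : ∫ ω, (X' ω) ^ 2 ∂μ = 1)
    (hV2 : ∫ ω, (V ω) ^ 2 ∂μ = σ2) (hS2 : ∫ ω, (S ω) ^ 2 ∂μ ≤ Λ)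
    (hXm : ∫ ω, X ω ∂μ = 0) (hX'm : ∫ ω, X' ω ∂μ = 0) (hVm : ∫ ω, V ω ∂μ = 0)
    -- integrability of all relevant products
    (hi1 : Integrable (fun ω => X' ω * S ω) μ)
    (hi2 : Integrable (fun ω => G ω * Real.sqrt (φ (G ω))) μ)
    (hi3 : Integrable (fun ω =>
      X' ω * (G ω * Real.sqrt (φ (G ω)) * X ω + S ω + V ω
        - G ω * Real.sqrt (φ (G ω)) * X' ω)) μ)
    -- X' uncorrelated with Z (consequence of `(X', G, Z)` independent with `E X' = 0`)
    (hX'Z : ∫ ω, X' ω * (G ω * Real.sqrt (φ (G ω)) * X ω + S ω + V ω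
        - G ω * Real.sqrt (φ (G ω)) * X' ω) ∂μ = 0) :
    ∫ ω, X' ω * S ω ∂μ = ∫ ω, G ω * Real.sqrt (φ (G ω)) ∂μ :=
  Xprime_S_correlation_general μ X X' S V G φ hφ hmX hmX' hmV hmG hX'G hpair hX'2 hX'm hi1 hi2 hi3
    hX'Z
end

section
/- Let G be a real random variable and φ: ℝ → ℝ≥0 measurable such that Var(G·√φ(G)) > 0. Suppose real random variables X, X', S, V satisfy: (X, S, G, V) mutually independent, all zero-mean with E[X²] = E[X'²] = 1, E[V²] = σ², (X, V, G) independent of (X', S), E[X'·S] = E[G·√φ(G)], and E[(S+V)²] ≥ E[(G·√φ(G)·X + S + V − G·√φ(G)·X')²]. Then we reach a contradiction; i.e., these conditions cannot all hold simultaneously. -/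
open MeasureTheory ProbabilityTheory

/-! With `W = G √φ(G)`, expand the square and factor every cross moment through the two
independence hypotheses: the centred `X` kills the terms linear in `X`, and the centred `X'`, `S`
kill all others except `E[W · X'S] = E[W] E[X'S] = E[W]²`. The decoder inequality then says
`E[X²] E[W²] + E[X'²] E[W²] - 2 E[W]² ≤ 0`, i.e. `2 Var W ≤ 0`. -/

section

variable {Ω : Type*} [MeasurableSpace Ω] {μ : Measure Ω}

theorem ProbabilityTheory.IndepFun.memLp_two_mul {W X : Ω → ℝ} (h : IndepFun W X μ)
    (hW : MemLp W 2 μ) (hX : MemLp X 2 μ) : MemLp (fun ω => W ω * X ω) 2 μ := by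
  have hW2X2 : Integrable (fun ω => W ω ^ 2 * X ω ^ 2) μ :=
    (h.comp (φ := fun w : ℝ => w ^ 2) (ψ := fun x : ℝ => x ^ 2) (by fun_prop)
      (by fun_prop)).integrable_mul hW.integrable_sq hX.integrable_sq
  refine (memLp_two_iff_integrable_sq (hW.1.mul hX.1)).2 ?_
  simpa only [Pi.mul_apply, mul_pow] using hW2X2

variable [IsFiniteMeasure μ]

theorem integral_mul_add_sq_of_indepFun {W X V : Ω → ℝ}
    (h : IndepFun (fun ω => (W ω, V ω)) X μ) (hW : MemLp W 2 μ) (hX : MemLp X 2 μ)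
    (hV : MemLp V 2 μ) (hX0 : ∫ ω, X ω ∂μ = 0) :
    ∫ ω, (W ω * X ω + V ω) ^ 2 ∂μ
      = (∫ ω, X ω ^ 2 ∂μ) * (∫ ω, W ω ^ 2 ∂μ) + ∫ ω, V ω ^ 2 ∂μ := by
  have hW2_X2 : IndepFun (fun ω => W ω ^ 2) (fun ω => X ω ^ 2) μ :=
    h.comp (φ := fun p : ℝ × ℝ => p.1 ^ 2) (ψ := fun x : ℝ => x ^ 2) (by fun_prop) (by fun_prop)
  have hWV_X : IndepFun (fun ω => W ω * V ω) X μ :=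
    h.comp (φ := fun p : ℝ × ℝ => p.1 * p.2) (ψ := id) (by fun_prop) (by fun_prop)
  have iWV : Integrable (fun ω => W ω * V ω) μ := hW.integrable_mul hV
  have iX := hX.integrable one_le_two
  have iW2X2 : Integrable (fun ω => W ω ^ 2 * X ω ^ 2) μ :=
    hW2_X2.integrable_mul hW.integrable_sq hX.integrable_sq
  have iWVX : Integrable (fun ω => W ω * V ω * X ω) μ := hWV_X.integrable_mul iWV iX
  have iV2 := hV.integrable_sq
  simp_rw [show ∀ ω, (W ω * X ω + V ω) ^ 2
      = W ω ^ 2 * X ω ^ 2 + 2 * (W ω * V ω * X ω) + V ω ^ 2 from fun ω => by ring]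
  rw [integral_add (by fun_prop) iV2, integral_add iW2X2 (by fun_prop), integral_const_mul,
    hW2_X2.integral_fun_mul_eq_mul_integral hW.integrable_sq.1 hX.integrable_sq.1,
    hWV_X.integral_fun_mul_eq_mul_integral iWV.1 iX.1, hX0]
  ring

theorem integral_add_sub_mul_sq_of_indepFun {A W X' S : Ω → ℝ}
    (h : IndepFun (fun ω => (A ω, W ω)) (fun ω => (X' ω, S ω)) μ) (hA : MemLp A 2 μ)
    (hW : MemLp W 2 μ) (hX' : MemLp X' 2 μ) (hS : MemLp S 2 μ)
    (hX'0 : ∫ ω, X' ω ∂μ = 0) (hS0 : ∫ ω, S ω ∂μ = 0) :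
    ∫ ω, (A ω + S ω - W ω * X' ω) ^ 2 ∂μ
      = ∫ ω, A ω ^ 2 ∂μ + ∫ ω, S ω ^ 2 ∂μ + (∫ ω, X' ω ^ 2 ∂μ) * (∫ ω, W ω ^ 2 ∂μ)
        - 2 * (∫ ω, W ω ∂μ) * ∫ ω, X' ω * S ω ∂μ := by
  have hA_S : IndepFun A S μ :=
    h.comp (φ := fun p : ℝ × ℝ => p.1) (ψ := fun q : ℝ × ℝ => q.2) (by fun_prop) (by fun_prop)
  have hAW_X' : IndepFun (fun ω => A ω * W ω) X' μ :=
    h.comp (φ := fun p : ℝ × ℝ => p.1 * p.2) (ψ := fun q : ℝ × ℝ => q.1) (by fun_prop)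
      (by fun_prop)
  have hW_X'S : IndepFun W (fun ω => X' ω * S ω) μ :=
    h.comp (φ := fun p : ℝ × ℝ => p.2) (ψ := fun q : ℝ × ℝ => q.1 * q.2) (by fun_prop)
      (by fun_prop)
  have hW2_X'2 : IndepFun (fun ω => W ω ^ 2) (fun ω => X' ω ^ 2) μ :=
    h.comp (φ := fun p : ℝ × ℝ => p.2 ^ 2) (ψ := fun q : ℝ × ℝ => q.1 ^ 2) (by fun_prop)
      (by fun_prop)
  have iA := hA.integrable one_le_two
  have iW := hW.integrable one_le_two
  have iX' := hX'.integrable one_le_two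
  have iS := hS.integrable one_le_two
  have iAW : Integrable (fun ω => A ω * W ω) μ := hA.integrable_mul hW
  have iX'S : Integrable (fun ω => X' ω * S ω) μ := hX'.integrable_mul hS
  have iAS : Integrable (fun ω => A ω * S ω) μ := hA.integrable_mul hS
  have iAWX' : Integrable (fun ω => A ω * W ω * X' ω) μ := hAW_X'.integrable_mul iAW iX'
  have iWX'S : Integrable (fun ω => W ω * (X' ω * S ω)) μ := hW_X'S.integrable_mul iW iX'S
  have iW2X'2 : Integrable (fun ω => W ω ^ 2 * X' ω ^ 2) μ :=
    hW2_X'2.integrable_mul hW.integrable_sq hX'.integrable_sq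
  have iA2 := hA.integrable_sq
  have iS2 := hS.integrable_sq
  simp_rw [show ∀ ω, (A ω + S ω - W ω * X' ω) ^ 2
      = A ω ^ 2 + S ω ^ 2 + W ω ^ 2 * X' ω ^ 2 + 2 * (A ω * S ω)
        - 2 * (A ω * W ω * X' ω) - 2 * (W ω * (X' ω * S ω)) from fun ω => by ring]
  rw [integral_sub, integral_sub, integral_add, integral_add, integral_add]
  · rw [integral_const_mul, integral_const_mul, integral_const_mul,
      hA_S.integral_fun_mul_eq_mul_integral iA.1 iS.1,
      hAW_X'.integral_fun_mul_eq_mul_integral iAW.1 iX'.1,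
      hW_X'S.integral_fun_mul_eq_mul_integral iW.1 iX'S.1,
      hW2_X'2.integral_fun_mul_eq_mul_integral hW.integrable_sq.1 hX'.integrable_sq.1, hX'0, hS0]
    ring
  all_goals fun_prop

end

theorem symmetrization_contradiction_general
    {Ω : Type*} [MeasurableSpace Ω] (μ : Measure Ω) [IsProbabilityMeasure μ]
    (X X' S V G : Ω → ℝ) (φ : ℝ → ℝ)
    (hφ : Measurable φ)
    (hmG : Measurable G)
    -- positive variance of G√φ(G)
    (hvar : 0 < variance (fun ω => G ω * Real.sqrt (φ (G ω))) μ)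
    (hL2 : MemLp (fun ω => G ω * Real.sqrt (φ (G ω))) 2 μ)
    -- (X, S, G, V) mutually independent
    (hindep4 : iIndepFun (β := fun _ : Fin 4 => ℝ)
      ![X, S, G, V] μ)
    -- (X, V, G) independent of (X', S)
    (hpair : IndepFun (fun ω => (X ω, V ω, G ω)) (fun ω => (X' ω, S ω)) μ)
    -- zero means and second moments
    (hXm : ∫ ω, X ω ∂μ = 0) (hX'm : ∫ ω, X' ω ∂μ = 0)
    (hSm : ∫ ω, S ω ∂μ = 0)
    (hX2 : ∫ ω, (X ω) ^ 2 ∂μ = 1) (hX'2 : ∫ ω, (X' ω) ^ 2 ∂μ = 1)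
    (hXL2 : MemLp X 2 μ) (hX'L2 : MemLp X' 2 μ) (hSL2 : MemLp S 2 μ)
    (hVL2 : MemLp V 2 μ)
    -- the correlation identity
    (hcorr : ∫ ω, X' ω * S ω ∂μ = ∫ ω, G ω * Real.sqrt (φ (G ω)) ∂μ)
    -- the norm inequality from the decoder
    (hineq : ∫ ω, (G ω * Real.sqrt (φ (G ω)) * X ω + S ω + V ω
        - G ω * Real.sqrt (φ (G ω)) * X' ω) ^ 2 ∂μ ≤ ∫ ω, (S ω + V ω) ^ 2 ∂μ) :
    False := by
  set w : ℝ → ℝ := fun g => g * Real.sqrt (φ g)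
  have hw : Measurable w := by fun_prop
  set W : Ω → ℝ := fun ω => w (G ω)
  have hGV_X : IndepFun (fun ω => (G ω, V ω)) X μ := by
    refine hindep4.indepFun_prodMk₀ (fun i => ?_) 2 3 0 (by decide) (by decide)
    fin_cases i
    exacts [hXL2.aemeasurable, hSL2.aemeasurable, hmG.aemeasurable, hVL2.aemeasurable]
  have hWV_X : IndepFun (fun ω => (W ω, V ω)) X μ :=
    hGV_X.comp (φ := fun p : ℝ × ℝ => (w p.1, p.2)) (ψ := id) (by fun_prop) (by fun_prop)
  have hWX : MemLp (fun ω => W ω * X ω) 2 μ :=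
    (hWV_X.comp (φ := fun p : ℝ × ℝ => p.1) (ψ := id) (by fun_prop) (by fun_prop)).memLp_two_mul
      hL2 hXL2
  have hsignal : IndepFun (fun ω => (W ω * X ω + V ω, W ω)) (fun ω => (X' ω, S ω)) μ :=
    hpair.comp (φ := fun p : ℝ × ℝ × ℝ => (w p.2.2 * p.1 + p.2.1, w p.2.2)) (ψ := id)
      (by fun_prop) (by fun_prop)
  have hnoise : IndepFun (fun ω => (V ω, (0 : ℝ))) (fun ω => (X' ω, S ω)) μ :=
    hpair.comp (φ := fun p : ℝ × ℝ × ℝ => (p.2.1, (0 : ℝ))) (ψ := id) (by fun_prop) (by fun_prop)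
  have hlhs : ∫ ω, (W ω * X ω + S ω + V ω - W ω * X' ω) ^ 2 ∂μ
      = 2 * (∫ ω, W ω ^ 2 ∂μ - (∫ ω, W ω ∂μ) ^ 2) + ∫ ω, V ω ^ 2 ∂μ + ∫ ω, S ω ^ 2 ∂μ := by
    calc _ = ∫ ω, (W ω * X ω + V ω + S ω - W ω * X' ω) ^ 2 ∂μ := by
          congr 1 with ω; ring
      _ = _ := by
          rw [integral_add_sub_mul_sq_of_indepFun hsignal (hWX.add hVL2) hL2 hX'L2 hSL2 hX'm hSm,
            integral_mul_add_sq_of_indepFun hWV_X hL2 hXL2 hVL2 hXm, hX2, hX'2, hcorr]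
          ring
  have hrhs : ∫ ω, (S ω + V ω) ^ 2 ∂μ = ∫ ω, V ω ^ 2 ∂μ + ∫ ω, S ω ^ 2 ∂μ := by
    simpa [add_comm] using
      integral_add_sub_mul_sq_of_indepFun hnoise hVL2 (memLp_const 0) hX'L2 hSL2 hX'm hSm
  rw [variance_eq_sub hL2] at hvar
  simp only [Pi.pow_apply] at hvar
  linarith

/-- Contradiction step: if `Var(G√φ(G)) > 0`, the stated independence/moment conditions,
`E[X'S] = E[G√φ(G)]`, and `E[(S+V)²] ≥ E[(G√φ(G)X + S + V − G√φ(G)X')²]`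
cannot all hold simultaneously. -/
theorem symmetrization_contradiction
    {Ω : Type*} [MeasurableSpace Ω] (μ : Measure Ω) [IsProbabilityMeasure μ]
    (X X' S V G : Ω → ℝ) (φ : ℝ → ℝ) (σ2 : ℝ)
    (hφ : Measurable φ) (hφ0 : ∀ g, 0 ≤ φ g)
    (hmX : Measurable X) (hmX' : Measurable X') (hmS : Measurable S)
    (hmV : Measurable V) (hmG : Measurable G)
    -- positive variance of G√φ(G)
    (hvar : 0 < variance (fun ω => G ω * Real.sqrt (φ (G ω))) μ)
    (hL2 : MemLp (fun ω => G ω * Real.sqrt (φ (G ω))) 2 μ)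
    -- (X, S, G, V) mutually independent
    (hindep4 : iIndepFun (β := fun _ : Fin 4 => ℝ)
      ![X, S, G, V] μ)
    -- X' independent of G
    (hX'G : IndepFun X' G μ)
    -- (X, V, G) independent of (X', S)
    (hpair : IndepFun (fun ω => (X ω, V ω, G ω)) (fun ω => (X' ω, S ω)) μ)
    -- zero means and second moments
    (hXm : ∫ ω, X ω ∂μ = 0) (hX'm : ∫ ω, X' ω ∂μ = 0)
    (hSm : ∫ ω, S ω ∂μ = 0) (hVm : ∫ ω, V ω ∂μ = 0)
    (hX2 : ∫ ω, (X ω) ^ 2 ∂μ = 1) (hX'2 : ∫ ω, (X' ω) ^ 2 ∂μ = 1)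
    (hV2 : ∫ ω, (V ω) ^ 2 ∂μ = σ2)
    (hXL2 : MemLp X 2 μ) (hX'L2 : MemLp X' 2 μ) (hSL2 : MemLp S 2 μ)
    (hVL2 : MemLp V 2 μ)
    -- the correlation identity
    (hcorr : ∫ ω, X' ω * S ω ∂μ = ∫ ω, G ω * Real.sqrt (φ (G ω)) ∂μ)
    -- the norm inequality from the decoder
    (hineq : ∫ ω, (G ω * Real.sqrt (φ (G ω)) * X ω + S ω + V ω
        - G ω * Real.sqrt (φ (G ω)) * X' ω) ^ 2 ∂μ ≤ ∫ ω, (S ω + V ω) ^ 2 ∂μ) :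
    False :=
  symmetrization_contradiction_general μ X X' S V G φ hφ hmG hvar hL2 hindep4 hpair hXm hX'm hSm hX2
    hX'2 hXL2 hX'L2 hSL2 hVL2 hcorr hineq
end
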